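/- arXiv:1304.3671 — 2 statements merged into one kernel-verified Lean document; each statement's English description precedes it below -/
import Mathlib

section
/- Let P be a set of point trajectories satisfying the pseudo-algebraic and general position assumptions, and let (pq, r, I) be a single Delaunay crossing for P in which r crosses the segment pq from L⁻_pq to L⁺_pq. Then for every t ∈ I at which r(t) ∈ L⁻_pq(t), the open cap B[p,q,r] ∩ L⁻_pq(t) (the part of the open circumdisc of p(t), q(t), r(t) lying strictly on the left of the oriented line from p(t) to q(t)) contains no point of P at time t; symmetrically, for every t ∈ I at which r(t) ∈ L⁺_pq(t), the open cap B[p,q,r] ∩ L⁺_pq(t) contains no point of P at time t. -/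
/-!
Kinetic Delaunay triangulations of points moving in the plane:
common definitions (trajectories, Delaunay edges, co-circularity and
collinearity events, general position assumptions, Delaunay crossings).
-/

noncomputable section

attribute [local instance] Classical.propDecidable

/-- The Euclidean plane. -/
abbrev Plane : Type := EuclideanSpace ℝ (Fin 2)

/-- A point trajectory: a moving point in the plane, parametrized by time. -/
abbrev Traj : Type := ℝ → Plane

/-- Signed orientation of `x` with respect to the line through `a` and `b`,
oriented from `a` to `b`; positive iff `x` lies in the open left halfplane `L⁻`. -/
def orient (a b x : Plane) : ℝ :=
  (b 0 - a 0) * (x 1 - a 1) - (b 1 - a 1) * (x 0 - a 0)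

/-- `x` lies in the open left halfplane `L⁻` of the line oriented from `a` to `b`. -/
def leftOf (a b x : Plane) : Prop := 0 < orient a b x

/-- `x` lies in the open right halfplane `L⁺` of the line oriented from `a` to `b`. -/
def rightOf (a b x : Plane) : Prop := orient a b x < 0

/-- `x` and `y` lie strictly on opposite sides of the line through `a` and `b`. -/
def OppositeSides (a b x y : Plane) : Prop := orient a b x * orient a b y < 0

/-- Four points of the plane are concyclic. -/
def Concyclic4 (a b c d : Plane) : Prop :=
  ∃ (o : Plane) (ρ : ℝ), 0 < ρ ∧
    dist a o = ρ ∧ dist b o = ρ ∧ dist c o = ρ ∧ dist d o = ρ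

/-- Five points of the plane are concyclic. -/
def Concyclic5 (a b c d e : Plane) : Prop :=
  ∃ (o : Plane) (ρ : ℝ), 0 < ρ ∧
    dist a o = ρ ∧ dist b o = ρ ∧ dist c o = ρ ∧ dist d o = ρ ∧ dist e o = ρ

/-- `x` lies in the open circumdisc of `a`, `b`, `c` (for non-collinear `a`, `b`, `c`
the circle through them is unique, so this is the usual notion). -/
def InCircumdisc (a b c x : Plane) : Prop :=
  ∃ (o : Plane) (ρ : ℝ), dist a o = ρ ∧ dist b o = ρ ∧ dist c o = ρ ∧ dist x o < ρ

/-- `x` lies strictly outside the circumdisc of `a`, `b`, `c`. -/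
def OutCircumdisc (a b c x : Plane) : Prop :=
  ∃ (o : Plane) (ρ : ℝ), dist a o = ρ ∧ dist b o = ρ ∧ dist c o = ρ ∧ ρ < dist x o

/-- The edge `pq` is Delaunay at time `t` with respect to the set `Q` of trajectories:
there is a closed disc whose boundary circle passes through `p t` and `q t` and whose
interior contains no point of `Q` at time `t`. -/
def DelaunayEdge (Q : Finset Traj) (p q : Traj) (t : ℝ) : Prop :=
  ∃ (o : Plane) (ρ : ℝ), dist (p t) o = ρ ∧ dist (q t) o = ρ ∧
    ∀ x ∈ Q, ¬ dist (x t) o < ρ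

/-- The four moving points `p, q, a, b` are concyclic at time `t`
(a co-circularity event). -/
def CocircAt (p q a b : Traj) (t : ℝ) : Prop :=
  Concyclic4 (p t) (q t) (a t) (b t)

/-- The three moving points `p, q, r` are collinear at time `t`
(a collinearity event). -/
def CollinAt (p q r : Traj) (t : ℝ) : Prop :=
  Collinear ℝ ({p t, q t, r t} : Set Plane)

/-- Pairwise distinctness of four trajectories. -/
def Distinct4 (p q a b : Traj) : Prop :=
  p ≠ q ∧ p ≠ a ∧ p ≠ b ∧ q ≠ a ∧ q ≠ b ∧ a ≠ b

/-- Pairwise distinctness of three trajectories. -/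
def Distinct3 (p q r : Traj) : Prop := p ≠ q ∧ p ≠ r ∧ q ≠ r

/-- The Delaunayhood of the edge `xy` is violated by the pair `u`, `v` at time `t`:
`u t` and `v t` lie strictly on opposite sides of the line through `x t` and `y t`,
and `v t` lies in the open circumdisc of `x t`, `y t`, `u t`. -/
def ViolatedBy (x y u v : Traj) (t : ℝ) : Prop :=
  OppositeSides (x t) (y t) (u t) (v t) ∧ InCircumdisc (x t) (y t) (u t) (v t)

/-- General position assumptions on a finite set of moving points: the motions are
continuous, no two points ever coincide, no five points are ever concyclic, no four
are ever collinear, no two co-circularity or collinearity events occur simultaneously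
and, at each such event, the involved point crosses the relevant circle or line
transversally. -/
structure GenPos (P : Finset Traj) : Prop where
  cont : ∀ p ∈ P, Continuous p
  never_coincide : ∀ p ∈ P, ∀ q ∈ P, p ≠ q → ∀ t : ℝ, p t ≠ q t
  no_five_cocirc : ∀ t : ℝ, ∀ p ∈ P, ∀ q ∈ P, ∀ a ∈ P, ∀ b ∈ P, ∀ e ∈ P,
    Distinct4 p q a b → p ≠ e → q ≠ e → a ≠ e → b ≠ e →
    ¬ Concyclic5 (p t) (q t) (a t) (b t) (e t)
  no_four_collin : ∀ t : ℝ, ∀ p ∈ P, ∀ q ∈ P, ∀ a ∈ P, ∀ b ∈ P,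
    Distinct4 p q a b → ¬ Collinear ℝ ({p t, q t, a t, b t} : Set Plane)
  unique_cocirc : ∀ t : ℝ, ∀ p ∈ P, ∀ q ∈ P, ∀ a ∈ P, ∀ b ∈ P,
    ∀ p' ∈ P, ∀ q' ∈ P, ∀ a' ∈ P, ∀ b' ∈ P,
    Distinct4 p q a b → Distinct4 p' q' a' b' →
    CocircAt p q a b t → CocircAt p' q' a' b' t →
    ({p, q, a, b} : Set Traj) = ({p', q', a', b'} : Set Traj)
  unique_collin : ∀ t : ℝ, ∀ p ∈ P, ∀ q ∈ P, ∀ r ∈ P, ∀ p' ∈ P, ∀ q' ∈ P, ∀ r' ∈ P,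
    Distinct3 p q r → Distinct3 p' q' r' →
    CollinAt p q r t → CollinAt p' q' r' t →
    ({p, q, r} : Set Traj) = ({p', q', r'} : Set Traj)
  cocirc_collin_separate : ∀ t : ℝ, ∀ p ∈ P, ∀ q ∈ P, ∀ a ∈ P, ∀ b ∈ P,
    ∀ p' ∈ P, ∀ q' ∈ P, ∀ r' ∈ P,
    Distinct4 p q a b → Distinct3 p' q' r' →
    CocircAt p q a b t → ¬ CollinAt p' q' r' t
  circle_transversal : ∀ p ∈ P, ∀ q ∈ P, ∀ a ∈ P, ∀ b ∈ P, Distinct4 p q a b →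
    ∀ t : ℝ, CocircAt p q a b t →
    ∃ δ > (0 : ℝ),
      ((∀ u ∈ Set.Ioo (t - δ) t, InCircumdisc (p u) (q u) (a u) (b u)) ∧
        (∀ u ∈ Set.Ioo t (t + δ), OutCircumdisc (p u) (q u) (a u) (b u))) ∨
      ((∀ u ∈ Set.Ioo (t - δ) t, OutCircumdisc (p u) (q u) (a u) (b u)) ∧
        (∀ u ∈ Set.Ioo t (t + δ), InCircumdisc (p u) (q u) (a u) (b u)))
  line_transversal : ∀ p ∈ P, ∀ q ∈ P, ∀ r ∈ P, Distinct3 p q r →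
    ∀ t : ℝ, CollinAt p q r t →
    ∃ δ > (0 : ℝ),
      ((∀ u ∈ Set.Ioo (t - δ) t, leftOf (p u) (q u) (r u)) ∧
        (∀ u ∈ Set.Ioo t (t + δ), rightOf (p u) (q u) (r u))) ∨
      ((∀ u ∈ Set.Ioo (t - δ) t, rightOf (p u) (q u) (r u)) ∧
        (∀ u ∈ Set.Ioo t (t + δ), leftOf (p u) (q u) (r u)))

/-- Pseudo-algebraicity: any four points of `P` are concyclic at most `s` times. -/
def CocircBound (P : Finset Traj) (s : ℕ) : Prop :=
  ∀ p ∈ P, ∀ q ∈ P, ∀ a ∈ P, ∀ b ∈ P, Distinct4 p q a b →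
    {t : ℝ | CocircAt p q a b t}.encard ≤ (s : ℕ∞)

/-- Pseudo-algebraicity: any three points of `P` are collinear at most `c` times. -/
def CollinBound (P : Finset Traj) (c : ℕ) : Prop :=
  ∀ p ∈ P, ∀ q ∈ P, ∀ r ∈ P, Distinct3 p q r →
    {t : ℝ | CollinAt p q r t}.encard ≤ (c : ℕ∞)

/-- A Delaunay co-circularity event of `P` occurs at time `t`: some four (distinct)
points of `P` are concyclic at time `t`, and the open disc bounded by their common
circle contains no point of `P` at time `t`. -/
def DelaunayCocircAt (P : Finset Traj) (t : ℝ) : Prop :=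
  ∃ p ∈ P, ∃ q ∈ P, ∃ a ∈ P, ∃ b ∈ P, Distinct4 p q a b ∧
    ∃ (o : Plane) (ρ : ℝ), 0 < ρ ∧
      dist (p t) o = ρ ∧ dist (q t) o = ρ ∧ dist (a t) o = ρ ∧ dist (b t) o = ρ ∧
      ∀ x ∈ P, ¬ dist (x t) o < ρ

/-- A `k`-shallow co-circularity of `p, q, a, b` at time `t`: the four points are
concyclic and the open disc bounded by their common circle contains at most `k`
points of `P` at time `t`. -/
def ShallowCocircAt (P : Finset Traj) (k : ℕ) (p q a b : Traj) (t : ℝ) : Prop :=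
  ∃ (o : Plane) (ρ : ℝ), 0 < ρ ∧
    dist (p t) o = ρ ∧ dist (q t) o = ρ ∧ dist (a t) o = ρ ∧ dist (b t) o = ρ ∧
    {x : Traj | x ∈ P ∧ dist (x t) o < ρ}.ncard ≤ k

/-- A `k`-shallow collinearity of `p, q, r` at time `t`: the three points are
collinear and one of the two open halfplanes bounded by the line through them
contains at most `k` points of `P` at time `t`. -/
def ShallowCollinAt (P : Finset Traj) (k : ℕ) (p q r : Traj) (t : ℝ) : Prop :=
  CollinAt p q r t ∧ p t ≠ q t ∧
    ({x : Traj | x ∈ P ∧ leftOf (p t) (q t) (x t)}.ncard ≤ k ∨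
      {x : Traj | x ∈ P ∧ rightOf (p t) (q t) (x t)}.ncard ≤ k)

/-- At time `t`, the point `r` lies on the segment `pq` and crosses it transversally
from the open halfplane `L⁻` (left of the oriented line `pq`) to `L⁺`. -/
def CrossesMinusPlus (p q r : Traj) (t : ℝ) : Prop :=
  r t ∈ segment ℝ (p t) (q t) ∧
    ∃ δ > (0 : ℝ),
      (∀ u ∈ Set.Ioo (t - δ) t, leftOf (p u) (q u) (r u)) ∧
      (∀ u ∈ Set.Ioo t (t + δ), rightOf (p u) (q u) (r u))

/-- At time `t`, the point `r` lies on the segment `pq` and crosses it transversally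
from `L⁺` to `L⁻`. -/
def CrossesPlusMinus (p q r : Traj) (t : ℝ) : Prop :=
  r t ∈ segment ℝ (p t) (q t) ∧
    ∃ δ > (0 : ℝ),
      (∀ u ∈ Set.Ioo (t - δ) t, rightOf (p u) (q u) (r u)) ∧
      (∀ u ∈ Set.Ioo t (t + δ), leftOf (p u) (q u) (r u))

/-- A Delaunay crossing `(pq, r, [t₀, t₁])`: the edge `pq` is Delaunay with respect
to `P` at times `t₀` and `t₁` but at no time in `(t₀, t₁)`; `r` lies on the closed
segment `pq` at least once during `[t₀, t₁]`; and `pq` is Delaunay with respect to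
`P ∖ {r}` throughout `[t₀, t₁]`. -/
structure DelaunayCrossing (P : Finset Traj) (p q r : Traj) (t₀ t₁ : ℝ) : Prop where
  lt : t₀ < t₁
  mem_p : p ∈ P
  mem_q : q ∈ P
  mem_r : r ∈ P
  distinct : Distinct3 p q r
  del_start : DelaunayEdge P p q t₀
  del_end : DelaunayEdge P p q t₁
  not_del : ∀ t ∈ Set.Ioo t₀ t₁, ¬ DelaunayEdge P p q t
  hits : ∃ t ∈ Set.Icc t₀ t₁, r t ∈ segment ℝ (p t) (q t)
  del_erase : ∀ t ∈ Set.Icc t₀ t₁, DelaunayEdge (P.erase r) p q t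

/-- A single Delaunay crossing, with the convention that `r` crosses the segment
`pq` from `L⁻` to `L⁺`: a Delaunay crossing in which `r` lies on the segment `pq`
at exactly one time of `[t₀, t₁]`, where it crosses from `L⁻` to `L⁺`.
(It is a clockwise `(p, r)`-crossing and a counterclockwise `(q, r)`-crossing.) -/
structure SingleCrossing (P : Finset Traj) (p q r : Traj) (t₀ t₁ : ℝ) : Prop where
  crossing : DelaunayCrossing P p q r t₀ t₁
  unique_hit : ∀ t ∈ Set.Icc t₀ t₁, ∀ t' ∈ Set.Icc t₀ t₁,
    r t ∈ segment ℝ (p t) (q t) → r t' ∈ segment ℝ (p t') (q t') → t = t'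
  dir : ∀ t ∈ Set.Icc t₀ t₁, r t ∈ segment ℝ (p t) (q t) → CrossesMinusPlus p q r t

/-- A double Delaunay crossing: a Delaunay crossing in which `r` lies on the
segment `pq` at exactly two times of `[t₀, t₁]`. -/
structure DoubleCrossing (P : Finset Traj) (p q r : Traj) (t₀ t₁ : ℝ) : Prop where
  crossing : DelaunayCrossing P p q r t₀ t₁
  two_hits : ∃ u v : ℝ, u ∈ Set.Icc t₀ t₁ ∧ v ∈ Set.Icc t₀ t₁ ∧ u ≠ v ∧
    r u ∈ segment ℝ (p u) (q u) ∧ r v ∈ segment ℝ (p v) (q v) ∧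
    ∀ t ∈ Set.Icc t₀ t₁, r t ∈ segment ℝ (p t) (q t) → t = u ∨ t = v

/-- The point `s` enters the cap `B[p,q,r] ∩ L⁺_pq` at time `t`: just before `t` it
lies strictly outside the circumdisc `B[p,q,r]`, and just after `t` it lies inside
`B[p,q,r]` and in the open right halfplane `L⁺` of the oriented line `pq`. -/
def EntersCapPlus (p q r s : Traj) (t : ℝ) : Prop :=
  ∃ δ > (0 : ℝ),
    (∀ u ∈ Set.Ioo (t - δ) t, OutCircumdisc (p u) (q u) (r u) (s u)) ∧
    (∀ u ∈ Set.Ioo t (t + δ),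
      InCircumdisc (p u) (q u) (r u) (s u) ∧ rightOf (p u) (q u) (s u))

/-- The point `s` leaves the cap `B[p,q,r] ∩ L⁻_pq` at time `t`: just before `t` it
lies inside the circumdisc `B[p,q,r]` and in the open left halfplane `L⁻` of the
oriented line `pq`, and just after `t` it lies strictly outside `B[p,q,r]`. -/
def LeavesCapMinus (p q r s : Traj) (t : ℝ) : Prop :=
  ∃ δ > (0 : ℝ),
    (∀ u ∈ Set.Ioo (t - δ) t,
      InCircumdisc (p u) (q u) (r u) (s u) ∧ leftOf (p u) (q u) (s u)) ∧
    (∀ u ∈ Set.Ioo t (t + δ), OutCircumdisc (p u) (q u) (r u) (s u))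


/-! ### Auxiliary machinery for Statement 15 -/

section Statement15Aux

private lemma sqsum_pos' {u0 u1 : ℝ} (h : ¬(u0 = 0 ∧ u1 = 0)) : 0 < u0^2 + u1^2 := by
  rcases lt_or_ge 0 (u0^2+u1^2) with h' | h'
  · exact h'
  · exact absurd ⟨by nlinarith [sq_nonneg u0, sq_nonneg u1],
      by nlinarith [sq_nonneg u0, sq_nonneg u1]⟩ h

private lemma sign1' {U A B : ℝ} (h : U*A = 2*B) (hA : A < 0) (hU : 0 < U) : B < 0 := by
  nlinarith

private lemma sign2' {M Or Ox : ℝ} (h1 : M*Or < 0) (h2 : 0 < Or*Ox) : M*Ox < 0 := by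
  nlinarith [mul_neg_of_neg_of_pos h1 h2, sq_nonneg Or, sq_nonneg Ox,
    sq_nonneg (Or+Ox), sq_nonneg (Or-Ox)]

private lemma sign3' {U A B C : ℝ} (h : U*(A - B) = 2*C) (hB : B < 0) (hC : C < 0)
    (hU : 0 < U) : A < 0 := by nlinarith

/-- Pencil of circles through two points: caps on a fixed side of the line are nested. -/
private lemma key_alg (a0 a1 b0 b1 r0 r1 x0 x1 c0 c1 d0 d1 s1 s2 : ℝ)
    (hac : (a0-c0)^2+(a1-c1)^2 = s1) (hbc : (b0-c0)^2+(b1-c1)^2 = s1)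
    (hrc : (r0-c0)^2+(r1-c1)^2 = s1)
    (had : (a0-d0)^2+(a1-d1)^2 = s2) (hbd : (b0-d0)^2+(b1-d1)^2 = s2)
    (hx : (x0-c0)^2+(x1-c1)^2 < s1)
    (hr : (r0-d0)^2+(r1-d1)^2 < s2)
    (hside : 0 < ((b0-a0)*(r1-a1)-(b1-a1)*(r0-a0)) * ((b0-a0)*(x1-a1)-(b1-a1)*(x0-a0))) :
    (x0-d0)^2+(x1-d1)^2 < s2 := by
  set u0 := b0 - a0 with hu0
  set u1 := b1 - a1 with hu1
  set w0 := c0 - d0 with hw0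
  set w1 := c1 - d1 with hw1
  have horth : u0*w0 + u1*w1 = 0 := by linear_combination (hac - hbc - had + hbd)/2
  set Or := u0*(r1-a1) - u1*(r0-a0) with hOr
  set Ox := u0*(x1-a1) - u1*(x0-a0) with hOx
  set M := u0*w1 - u1*w0 with hM
  have hOrne : Or ≠ 0 := by
    intro h; rw [h, zero_mul] at hside; exact lt_irrefl 0 hside
  have hu : ¬(u0 = 0 ∧ u1 = 0) := by
    rintro ⟨h0, h1⟩; exact hOrne (by rw [hOr, h0, h1]; ring)
  have hUpos : 0 < u0^2+u1^2 := sqsum_pos' hu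
  have hidr : (u0^2+u1^2) * (((r0-d0)^2+(r1-d1)^2 - s2) - ((r0-c0)^2+(r1-c1)^2 - s1))
      = 2*(M*Or) := by
    linear_combination (u0^2+u1^2)*had - (u0^2+u1^2)*hac + (2*((r0-a0)*u0+(r1-a1)*u1))*horth
  have hidx : (u0^2+u1^2) * (((x0-d0)^2+(x1-d1)^2 - s2) - ((x0-c0)^2+(x1-c1)^2 - s1))
      = 2*(M*Ox) := by
    linear_combination (u0^2+u1^2)*had - (u0^2+u1^2)*hac + (2*((x0-a0)*u0+(x1-a1)*u1))*horth
  have hpw1r : (r0-c0)^2+(r1-c1)^2 - s1 = 0 := by rw [hrc]; ring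
  rw [hpw1r, sub_zero] at hidr
  have hMOr : M*Or < 0 := sign1' hidr (by linarith) hUpos
  have hMOx : M*Ox < 0 := sign2' hMOr hside
  have := sign3' hidx (by linarith : (x0-c0)^2+(x1-c1)^2 - s1 < 0) hMOx hUpos
  linarith

/-- In-circle determinant on coordinates. -/
private def idetR (a0 a1 b0 b1 c0 c1 x0 x1 : ℝ) : ℝ :=
  (a0-x0) * ((b1-x1)*((c0-x0)^2+(c1-x1)^2) - ((b0-x0)^2+(b1-x1)^2)*(c1-x1))
  - (a1-x1) * ((b0-x0)*((c0-x0)^2+(c1-x1)^2) - ((b0-x0)^2+(b1-x1)^2)*(c0-x0))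
  + ((a0-x0)^2+(a1-x1)^2) * ((b0-x0)*(c1-x1) - (b1-x1)*(c0-x0))

private lemma idet_eq (a0 a1 b0 b1 c0 c1 x0 x1 o0 o1 s : ℝ)
    (ha : (a0-o0)^2+(a1-o1)^2 = s) (hb : (b0-o0)^2+(b1-o1)^2 = s)
    (hc : (c0-o0)^2+(c1-o1)^2 = s) :
    idetR a0 a1 b0 b1 c0 c1 x0 x1
      = (s - ((x0-o0)^2+(x1-o1)^2)) * ((b0-a0)*(c1-a1) - (b1-a1)*(c0-a0)) := by
  unfold idetR
  linear_combination ((b0-x0)*(c1-x1)-(b1-x1)*(c0-x0))*ha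
    - ((a0-x0)*(c1-x1)-(a1-x1)*(c0-x0))*hb
    + ((a0-x0)*(b1-x1)-(a1-x1)*(b0-x0))*hc

private lemma circum_eq (a0 a1 b0 b1 c0 c1 : ℝ)
    (hd : (b0-a0)*(c1-a1) - (b1-a1)*(c0-a0) ≠ 0) :
    ∃ o0 o1 : ℝ,
      (b0-o0)^2+(b1-o1)^2 = (a0-o0)^2+(a1-o1)^2 ∧
      (c0-o0)^2+(c1-o1)^2 = (a0-o0)^2+(a1-o1)^2 := by
  set d := (b0-a0)*(c1-a1) - (b1-a1)*(c0-a0) with hdd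
  set su := (b0-a0)^2+(b1-a1)^2 with hsu
  set sv := (c0-a0)^2+(c1-a1)^2 with hsv
  refine ⟨a0 + ((c1-a1)*su - (b1-a1)*sv)/(2*d), a1 + ((b0-a0)*sv - (c0-a0)*su)/(2*d), ?_, ?_⟩
  · field_simp
    ring
  · field_simp
    ring

private lemma dist_coord (x y : Plane) :
    dist x y = Real.sqrt ((x 0 - y 0)^2 + (x 1 - y 1)^2) := by
  rw [EuclideanSpace.dist_eq]
  congr 1
  simp [Fin.sum_univ_two, Real.dist_eq, sq_abs]

private lemma sq_of_dist_eq {x y : Plane} {ρ : ℝ} (h : dist x y = ρ) :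
    (x 0 - y 0)^2 + (x 1 - y 1)^2 = ρ^2 := by
  have h2 : dist x y ^ 2 = ρ^2 := by rw [h]
  rw [dist_coord, Real.sq_sqrt (by positivity)] at h2
  exact h2

private lemma sq_of_dist_lt {x y : Plane} {ρ : ℝ} (h : dist x y < ρ) :
    (x 0 - y 0)^2 + (x 1 - y 1)^2 < ρ^2 := by
  have h0 : (0:ℝ) ≤ dist x y := dist_nonneg
  have h2 : dist x y ^ 2 < ρ^2 := by nlinarith
  rw [dist_coord, Real.sq_sqrt (by positivity)] at h2
  exact h2

private lemma dist_lt_of_sq {x y : Plane} {ρ : ℝ} (hρ : 0 ≤ ρ)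
    (h : (x 0 - y 0)^2 + (x 1 - y 1)^2 < ρ^2) : dist x y < ρ := by
  rcases eq_or_lt_of_le hρ with h0 | h0
  · exfalso; nlinarith [sq_nonneg (x 0 - y 0), sq_nonneg (x 1 - y 1)]
  · rw [dist_coord]
    exact (Real.sqrt_lt' h0).mpr h

/-- In-circle determinant of four points of the plane. -/
private def idetP (a b c x : Plane) : ℝ :=
  idetR (a 0) (a 1) (b 0) (b 1) (c 0) (c 1) (x 0) (x 1)

private lemma incirc_iff {a b c x : Plane} (h : orient a b c ≠ 0) :
    InCircumdisc a b c x ↔ 0 < idetP a b c x * orient a b c := by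
  constructor
  · rintro ⟨o, ρ, ha, hb, hc, hx⟩
    have hρ : 0 ≤ ρ := ha ▸ dist_nonneg
    have hid := idet_eq (a 0) (a 1) (b 0) (b 1) (c 0) (c 1) (x 0) (x 1) (o 0) (o 1) (ρ^2)
      (sq_of_dist_eq ha) (sq_of_dist_eq hb) (sq_of_dist_eq hc)
    have hE : orient a b c = (b 0 - a 0)*(c 1 - a 1) - (b 1 - a 1)*(c 0 - a 0) := rfl
    have hxx := sq_of_dist_lt hx
    have h1 : 0 < ρ^2 - ((x 0 - o 0)^2 + (x 1 - o 1)^2) := by linarith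
    have h2 : 0 < orient a b c * orient a b c := mul_self_pos.mpr h
    calc (0:ℝ) < (ρ^2 - ((x 0 - o 0)^2 + (x 1 - o 1)^2)) * (orient a b c * orient a b c) :=
          mul_pos h1 h2
      _ = idetP a b c x * orient a b c := by
          rw [idetP, hid, ← hE]; ring
  · intro hpos
    have hd : (b 0 - a 0)*(c 1 - a 1) - (b 1 - a 1)*(c 0 - a 0) ≠ 0 := h
    obtain ⟨o0, o1, hb', hc'⟩ := circum_eq (a 0) (a 1) (b 0) (b 1) (c 0) (c 1) hd
    set o : Plane := (WithLp.equiv 2 (Fin 2 → ℝ)).symm ![o0, o1] with hodef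
    have ho0 : o 0 = o0 := rfl
    have ho1 : o 1 = o1 := rfl
    have hid := idet_eq (a 0) (a 1) (b 0) (b 1) (c 0) (c 1) (x 0) (x 1) o0 o1
      ((a 0 - o0)^2 + (a 1 - o1)^2) rfl hb' hc'
    have hE : orient a b c = (b 0 - a 0)*(c 1 - a 1) - (b 1 - a 1)*(c 0 - a 0) := rfl
    have hsq : (x 0 - o0)^2 + (x 1 - o1)^2 < (a 0 - o0)^2 + (a 1 - o1)^2 := by
      have h2 : 0 < orient a b c * orient a b c := mul_self_pos.mpr h
      have h3 : idetP a b c x * orient a b c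
          = ((a 0 - o0)^2 + (a 1 - o1)^2 - ((x 0 - o0)^2 + (x 1 - o1)^2))
            * (orient a b c * orient a b c) := by
        rw [idetP, hid, ← hE]; ring
      rw [h3] at hpos
      nlinarith
    refine ⟨o, dist a o, rfl, ?_, ?_, ?_⟩
    · rw [dist_coord, dist_coord, ho0, ho1]
      exact congrArg Real.sqrt hb'
    · rw [dist_coord, dist_coord, ho0, ho1]
      exact congrArg Real.sqrt hc'
    · rw [dist_coord, dist_coord, ho0, ho1]
      exact Real.sqrt_lt_sqrt (by positivity) hsq

private lemma interiorCaseEmpty15 {P : Finset Traj} {p q r : Traj} {t₀ t₁ : ℝ}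
    (hnotdel : ∀ t ∈ Set.Ioo t₀ t₁, ¬ DelaunayEdge P p q t)
    (herase : ∀ t ∈ Set.Icc t₀ t₁, DelaunayEdge (P.erase r) p q t)
    {t : ℝ} (ht : t ∈ Set.Ioo t₀ t₁) {x : Traj} (hx : x ∈ P)
    (hin : InCircumdisc (p t) (q t) (r t) (x t))
    (hside : 0 < orient (p t) (q t) (r t) * orient (p t) (q t) (x t)) : False := by
  obtain ⟨o₁, ρ₁, hp1, hq1, hr1, hx1⟩ := hin
  obtain ⟨o₂, ρ₂, hp2, hq2, hempty⟩ := herase t (Set.mem_Icc_of_Ioo ht)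
  by_cases hr2 : dist (r t) o₂ < ρ₂
  · have hρ₂ : 0 ≤ ρ₂ := hp2 ▸ dist_nonneg
    have hx2 : dist (x t) o₂ < ρ₂ := by
      apply dist_lt_of_sq hρ₂
      exact key_alg (p t 0) (p t 1) (q t 0) (q t 1) (r t 0) (r t 1) (x t 0) (x t 1)
        (o₁ 0) (o₁ 1) (o₂ 0) (o₂ 1) (ρ₁^2) (ρ₂^2)
        (sq_of_dist_eq hp1) (sq_of_dist_eq hq1) (sq_of_dist_eq hr1)
        (sq_of_dist_eq hp2) (sq_of_dist_eq hq2)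
        (sq_of_dist_lt hx1) (sq_of_dist_lt hr2) hside
    have hxr : x ≠ r := by
      intro hh
      rw [hh, hr1] at hx1
      exact lt_irrefl _ hx1
    exact hempty x (Finset.mem_erase.mpr ⟨hxr, hx⟩) hx2
  · exact hnotdel t ht ⟨o₂, ρ₂, hp2, hq2, fun y hy => by
      by_cases hyr : y = r
      · rw [hyr]; exact hr2
      · exact hempty y (Finset.mem_erase.mpr ⟨hyr, hy⟩)⟩

private lemma cont_coord {f : ℝ → Plane} (hf : Continuous f) (i : Fin 2) :
    Continuous fun u => f u i :=
  (EuclideanSpace.proj i).continuous.comp hf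

private lemma cont_orient {p q r : ℝ → Plane} (hp : Continuous p) (hq : Continuous q)
    (hr : Continuous r) : Continuous fun u => orient (p u) (q u) (r u) := by
  have h1 := cont_coord hp 0
  have h2 := cont_coord hp 1
  have h3 := cont_coord hq 0
  have h4 := cont_coord hq 1
  have h5 := cont_coord hr 0
  have h6 := cont_coord hr 1
  unfold orient
  fun_prop

private lemma cont_idet {p q r x : ℝ → Plane} (hp : Continuous p) (hq : Continuous q)
    (hr : Continuous r) (hx : Continuous x) :
    Continuous fun u => idetP (p u) (q u) (r u) (x u) := by
  have h1 := cont_coord hp 0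
  have h2 := cont_coord hp 1
  have h3 := cont_coord hq 0
  have h4 := cont_coord hq 1
  have h5 := cont_coord hr 0
  have h6 := cont_coord hr 1
  have h7 := cont_coord hx 0
  have h8 := cont_coord hx 1
  unfold idetP idetR
  fun_prop

private lemma exists_interior {t₀ t₁ t δ : ℝ} (hlt : t₀ < t₁) (ht : t ∈ Set.Icc t₀ t₁)
    (hδ : 0 < δ) : ∃ u ∈ Set.Ioo t₀ t₁, dist u t < δ := by
  rcases lt_or_eq_of_le ht.2 with h | h
  · refine ⟨min (t+δ/2) ((t+t₁)/2), ⟨?_, ?_⟩, ?_⟩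
    · exact lt_min (by linarith [ht.1]) (by linarith [ht.1])
    · exact lt_of_le_of_lt (min_le_right _ _) (by linarith)
    · have h1 : t < min (t+δ/2) ((t+t₁)/2) := lt_min (by linarith) (by linarith)
      have h2 : min (t+δ/2) ((t+t₁)/2) ≤ t + δ/2 := min_le_left _ _
      rw [Real.dist_eq, abs_lt]
      constructor <;> linarith
  · have ht0 : t₀ < t := by rw [h]; exact hlt
    refine ⟨max (t-δ/2) ((t₀+t)/2), ⟨?_, ?_⟩, ?_⟩
    · exact lt_of_lt_of_le (by linarith : t₀ < (t₀+t)/2) (le_max_right _ _)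
    · rw [← h] at hlt ⊢
      exact max_lt (by linarith) (by linarith)
    · have h1 : max (t-δ/2) ((t₀+t)/2) < t := max_lt (by linarith) (by linarith)
      have h2 : t - δ/2 ≤ max (t-δ/2) ((t₀+t)/2) := le_max_left _ _
      rw [Real.dist_eq, abs_lt]
      constructor <;> linarith

private lemma no_cap_point {P : Finset Traj} (hcont : ∀ y ∈ P, Continuous y)
    {p q r : Traj} {t₀ t₁ : ℝ} (hlt : t₀ < t₁)
    (hp : p ∈ P) (hq : q ∈ P) (hr : r ∈ P)
    (hnotdel : ∀ t ∈ Set.Ioo t₀ t₁, ¬ DelaunayEdge P p q t)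
    (herase : ∀ t ∈ Set.Icc t₀ t₁, DelaunayEdge (P.erase r) p q t)
    {t : ℝ} (ht : t ∈ Set.Icc t₀ t₁) {x : Traj} (hx : x ∈ P)
    (hin : InCircumdisc (p t) (q t) (r t) (x t))
    (hside : 0 < orient (p t) (q t) (r t) * orient (p t) (q t) (x t)) : False := by
  by_cases hint : t ∈ Set.Ioo t₀ t₁
  · exact interiorCaseEmpty15 hnotdel herase hint hx hin hside
  · have horne : orient (p t) (q t) (r t) ≠ 0 := by
      intro hh; rw [hh, zero_mul] at hside; exact lt_irrefl _ hside
    have hidet : 0 < idetP (p t) (q t) (r t) (x t) * orient (p t) (q t) (r t) :=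
      (incirc_iff horne).mp hin
    have hF1 : Continuous fun u => orient (p u) (q u) (r u) * orient (p u) (q u) (x u) :=
      (cont_orient (hcont p hp) (hcont q hq) (hcont r hr)).mul
        (cont_orient (hcont p hp) (hcont q hq) (hcont x hx))
    have hF2 : Continuous fun u =>
        idetP (p u) (q u) (r u) (x u) * orient (p u) (q u) (r u) :=
      (cont_idet (hcont p hp) (hcont q hq) (hcont r hr) (hcont x hx)).mul
        (cont_orient (hcont p hp) (hcont q hq) (hcont r hr))
    have hev1 : ∀ᶠ u in nhds t,
        0 < orient (p u) (q u) (r u) * orient (p u) (q u) (x u) :=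
      hF1.continuousAt.eventually (eventually_gt_nhds hside)
    have hev2 : ∀ᶠ u in nhds t,
        0 < idetP (p u) (q u) (r u) (x u) * orient (p u) (q u) (r u) :=
      hF2.continuousAt.eventually (eventually_gt_nhds hidet)
    have hev := hev1.and hev2
    rw [Metric.eventually_nhds_iff] at hev
    obtain ⟨δ, hδ, hball⟩ := hev
    obtain ⟨u, hu, hud⟩ := exists_interior hlt ht hδ
    obtain ⟨hc1, hc2⟩ := hball hud
    have horneu : orient (p u) (q u) (r u) ≠ 0 := by
      intro hh; rw [hh, mul_zero] at hc2; exact lt_irrefl _ hc2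
    exact interiorCaseEmpty15 hnotdel herase hu hx ((incirc_iff horneu).mpr hc2) hc1

end Statement15Aux

/-- (Established in the proof of Lemma 4.2 of the paper.) During a
single Delaunay crossing `(pq, r, [t₀,t₁])` in which `r` crosses `pq` from `L⁻` to
`L⁺`: whenever `r ∈ L⁻_pq`, the open cap `B[p,q,r] ∩ L⁻_pq` contains no point of
`P`, and whenever `r ∈ L⁺_pq`, the open cap `B[p,q,r] ∩ L⁺_pq` contains no point of
`P`. -/
theorem statement15 (sc cc : ℕ) (P : Finset Traj)
    (hP : GenPos P) (hs : CocircBound P sc) (hc : CollinBound P cc)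
    (p q r : Traj) (t₀ t₁ : ℝ)
    (hcross : SingleCrossing P p q r t₀ t₁) :
    ∀ t ∈ Set.Icc t₀ t₁,
      (leftOf (p t) (q t) (r t) →
        ∀ x ∈ P, ¬ (InCircumdisc (p t) (q t) (r t) (x t) ∧
          leftOf (p t) (q t) (x t))) ∧
      (rightOf (p t) (q t) (r t) →
        ∀ x ∈ P, ¬ (InCircumdisc (p t) (q t) (r t) (x t) ∧
          rightOf (p t) (q t) (x t))) := by
  intro t ht
  have hcont := hP.cont
  have hc := hcross.crossing
  constructor
  · rintro hlr x hxP ⟨hin, hlx⟩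
    exact no_cap_point hcont hc.lt hc.mem_p hc.mem_q hc.mem_r hc.not_del hc.del_erase
      ht hxP hin (mul_pos hlr hlx)
  · rintro hrr x hxP ⟨hin, hrx⟩
    exact no_cap_point hcont hc.lt hc.mem_p hc.mem_q hc.mem_r hc.not_del hc.del_erase
      ht hxP hin (mul_pos_of_neg_of_neg hrr hrx)
end
end

section
/- Let P be a set of point trajectories satisfying the pseudo-algebraic and general position assumptions, and let (pq, r, I=[t₀,t₁]) be a Delaunay crossing for P. Then: (a) no point of P∖{p,q,r} lies on the closed segment p(t)q(t) at any time t ∈ (t₀,t₁); and (b) at no time t ∈ (t₀,t₁) does r lie on the line through p(t) and q(t) outside the closed segment p(t)q(t). -/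
/-!
Kinetic Delaunay triangulations of points moving in the plane:
common definitions (trajectories, Delaunay edges, co-circularity and
collinearity events, general position assumptions, Delaunay crossings).
-/

noncomputable section

attribute [local instance] Classical.propDecidable

/-!
Throughout the crossing, Delaunayhood of `pq` with respect to `P ∖ {r}` provides a disc
with `p` and `q` on its boundary circle and no point of `P` other than `r` in its interior.
By strict convexity of the disc, every point strictly between `p` and `q` lies in the open
disc, which gives (a). On the line `pq`, the open disc only meets the chord `pq`; so if `r`
were on that line outside the chord, the same disc would show that `pq` is Delaunay with
respect to all of `P`, which it is not during `(t₀, t₁)`.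
-/

theorem mem_segment_of_collinear_of_dist_lt {V : Type*} [NormedAddCommGroup V]
    [NormedSpace ℝ V] [StrictConvexSpace ℝ V] {a b x o : V} {ρ : ℝ} (hab : a ≠ b)
    (hcol : Collinear ℝ ({a, b, x} : Set V)) (ha : dist a o = ρ) (hb : dist b o = ρ)
    (hx : dist x o < ρ) : x ∈ segment ℝ a b := by
  have hxa : x ≠ a := by rintro rfl; exact hx.ne ha
  have hxb : x ≠ b := by rintro rfl; exact hx.ne hb
  rcases hcol.wbtw_or_wbtw_or_wbtw with h | h | h
  · have hlt := Sbtw.dist_lt_max_dist o ⟨h, hab.symm, hxb.symm⟩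
    rw [ha, max_eq_left hx.le] at hlt
    exact absurd hb hlt.ne
  · exact (wbtw_comm.1 h).mem_segment
  · have hlt := Sbtw.dist_lt_max_dist o ⟨h, hxa.symm, hab⟩
    rw [hb, max_eq_right hx.le] at hlt
    exact absurd ha hlt.ne

namespace DelaunayEdge

variable {Q : Finset Traj} {p q : Traj} {t : ℝ}

theorem not_mem_segment (h : DelaunayEdge Q p q t) {x : Traj} (hx : x ∈ Q)
    (hxp : x t ≠ p t) (hxq : x t ≠ q t) : x t ∉ segment ℝ (p t) (q t) := by
  obtain ⟨o, ρ, hp, hq, hempty⟩ := h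
  intro hseg
  have hlt := Sbtw.dist_lt_max_dist o ⟨mem_segment_iff_wbtw.1 hseg, hxp, hxq⟩
  rw [hp, hq, max_self] at hlt
  exact hempty x hx hlt

theorem of_erase {r : Traj} (h : DelaunayEdge (Q.erase r) p q t) (hpq : p t ≠ q t)
    (hcol : CollinAt p q r t) (hr : r t ∉ segment ℝ (p t) (q t)) :
    DelaunayEdge Q p q t := by
  obtain ⟨o, ρ, hp, hq, hempty⟩ := h
  refine ⟨o, ρ, hp, hq, fun x hx hxo => ?_⟩
  by_cases hxr : x = r
  · subst hxr
    exact hr (mem_segment_of_collinear_of_dist_lt hpq hcol hp hq hxo)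
  · exact hempty x (Finset.mem_erase.2 ⟨hxr, hx⟩) hxo

end DelaunayEdge

theorem statement16_general (P : Finset Traj)
    (hP : GenPos P)
    (p q r : Traj) (t₀ t₁ : ℝ)
    (hcross : DelaunayCrossing P p q r t₀ t₁) :
    (∀ x ∈ P, x ≠ p → x ≠ q → x ≠ r →
      ∀ t ∈ Set.Ioo t₀ t₁, x t ∉ segment ℝ (p t) (q t)) ∧
    (∀ t ∈ Set.Ioo t₀ t₁, CollinAt p q r t → r t ∈ segment ℝ (p t) (q t)) := by
  have hdel (t : ℝ) (ht : t ∈ Set.Ioo t₀ t₁) : DelaunayEdge (P.erase r) p q t :=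
    hcross.del_erase t (Set.Ioo_subset_Icc_self ht)
  refine ⟨fun x hx hxp hxq hxr t ht => ?_, fun t ht hcol => ?_⟩
  · exact (hdel t ht).not_mem_segment (Finset.mem_erase.2 ⟨hxr, hx⟩)
      (hP.never_coincide x hx p hcross.mem_p hxp t)
      (hP.never_coincide x hx q hcross.mem_q hxq t)
  · by_contra hr
    have hpq := hP.never_coincide p hcross.mem_p q hcross.mem_q hcross.distinct.1 t
    exact hcross.not_del t ht ((hdel t ht).of_erase hpq hcol hr)

/-- (Established in Section 3 of the paper.) During a Delaunay
crossing `(pq, r, [t₀,t₁])`: (a) no point of `P ∖ {p,q,r}` lies on the closed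
segment `pq` at any time of `(t₀,t₁)`; and (b) at no time of `(t₀,t₁)` does `r` lie
on the line through `p` and `q` outside the closed segment `pq`. -/
theorem statement16 (s c : ℕ) (P : Finset Traj)
    (hP : GenPos P) (hs : CocircBound P s) (hc : CollinBound P c)
    (p q r : Traj) (t₀ t₁ : ℝ)
    (hcross : DelaunayCrossing P p q r t₀ t₁) :
    (∀ x ∈ P, x ≠ p → x ≠ q → x ≠ r →
      ∀ t ∈ Set.Ioo t₀ t₁, x t ∉ segment ℝ (p t) (q t)) ∧
    (∀ t ∈ Set.Ioo t₀ t₁, CollinAt p q r t → r t ∈ segment ℝ (p t) (q t)) :=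
  statement16_general P hP p q r t₀ t₁ hcross
end
end
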